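/- arXiv:2106.01038 — 5 statements merged into one kernel-verified Lean document; each statement's English description precedes it below -/
import Mathlib

section
/- Let n ≥ 1, let H_I and H_O be finite-dimensional complex Hilbert spaces, and let R be the map defined in the context. Then for any two linear operators A and B on the system space S = (H_I ⊗ H_O)^{⊗n}, one has R(A)·R(B) = R(A·B). -/
open Matrix Kronecker

/-- The rank-one projector onto `|0⟩⊗|1⟩⊗…⊗|n−1⟩` in `(ℂ^n)^{⊗n}`, whose `n`
tensor factors are indexed so that the total space has basis `Fin n → Fin n`. -/
noncomputable def refProj (n : ℕ) : Matrix (Fin n → Fin n) (Fin n → Fin n) ℂ :=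
  Matrix.of fun r r' => if r = (fun k => k) ∧ r' = (fun k => k) then 1 else 0

/-- The unitary `U_g^{SR}` jointly permuting the `n` system factors `H_I ⊗ H_O`
(basis `Fin dI × Fin dO`), the `n` reference input factors `ℂ^n` and the `n`
reference output factors `H_{R_O}` (basis `Fin dR`), according to `g ∈ S_n`. -/
noncomputable def permSR (n dI dO dR : ℕ) (g : Equiv.Perm (Fin n)) :
    Matrix ((Fin n → Fin dI × Fin dO) × (Fin n → Fin n) × (Fin n → Fin dR))
      ((Fin n → Fin dI × Fin dO) × (Fin n → Fin n) × (Fin n → Fin dR)) ℂ :=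
  Matrix.of fun p q => if q = (p.1 ∘ g, p.2.1 ∘ g, p.2.2 ∘ g) then 1 else 0

/-- `R(A) = Σ_{g ∈ S_n} U_g^{SR} (A ⊗ [01…(n−1)]^{R_I} ⊗ 1^{R_O}) (U_g^{SR})†`. -/
noncomputable def Rmap (n dI dO dR : ℕ)
    (A : Matrix (Fin n → Fin dI × Fin dO) (Fin n → Fin dI × Fin dO) ℂ) :
    Matrix ((Fin n → Fin dI × Fin dO) × (Fin n → Fin n) × (Fin n → Fin dR))
      ((Fin n → Fin dI × Fin dO) × (Fin n → Fin n) × (Fin n → Fin dR)) ℂ :=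
  ∑ g : Equiv.Perm (Fin n),
    permSR n dI dO dR g *
      (A ⊗ₖ (refProj n ⊗ₖ (1 : Matrix (Fin n → Fin dR) (Fin n → Fin dR) ℂ))) *
      (permSR n dI dO dR g)ᴴ

/-!
`permSR g` is the Kronecker product of three precomposition permutation matrices `V_g`, and
`refProj n` projects onto the basis vector of the identity map `Fin n → Fin n`, whose stabiliser
under precomposition is trivial; hence `refProj n * V_k * refProj n` is `refProj n` for `k = 1`
and `0` otherwise. With `K(A) = A ⊗ refProj n ⊗ 1`, the term `U_g K(A) U_g† U_h K(B) U_h†` of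
`R(A) R(B)` equals `U_g (K(A) U_{g⁻¹h} K(B)) U_h†`, which vanishes unless `g = h`, when it is
`U_g K(AB) U_g†`.
-/

open Equiv

section Precomposition

variable {ι α : Type*}

def precompPerm (α : Type*) (g : Perm ι) : Perm (ι → α) :=
  arrowCongr g.symm (Equiv.refl α)

@[simp]
theorem precompPerm_apply (g : Perm ι) (p : ι → α) : precompPerm α g p = p ∘ g := rfl

theorem precompPerm_one : precompPerm α (1 : Perm ι) = 1 := rfl

theorem precompPerm_mul (g h : Perm ι) :
    precompPerm α (g * h) = precompPerm α h * precompPerm α g := rfl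

variable [Fintype ι] [DecidableEq α] {R : Type*} [Zero R] [One R]

theorem permMatrix_precompPerm_apply (g : Perm ι) (p q : ι → α) :
    (precompPerm α g).permMatrix R p q = if q = p ∘ g then 1 else 0 := by
  rw [Perm.permMatrix, PEquiv.toMatrix_toPEquiv_apply, Pi.single_apply, precompPerm_apply]

theorem permMatrix_precompPerm_apply_id [DecidableEq ι] (g : Perm ι) :
    (precompPerm ι g).permMatrix R (fun i => i) (fun i => i) = if g = 1 then 1 else 0 := by
  simp [Perm.ext_iff, funext_iff]

end Precomposition

theorem permSR_eq_kronecker (n dI dO dR : ℕ) (g : Perm (Fin n)) :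
    permSR n dI dO dR g =
      (precompPerm _ g).permMatrix ℂ ⊗ₖ
        ((precompPerm _ g).permMatrix ℂ ⊗ₖ (precompPerm _ g).permMatrix ℂ) := by
  ext p q
  simp only [permSR, of_apply, kroneckerMap_apply, permMatrix_precompPerm_apply,
    ite_zero_mul_ite_zero, mul_one, Prod.ext_iff]

theorem permSR_mul (n dI dO dR : ℕ) (g h : Perm (Fin n)) :
    permSR n dI dO dR g * permSR n dI dO dR h = permSR n dI dO dR (g * h) := by
  simp only [permSR_eq_kronecker, ← mul_kronecker_mul, precompPerm_mul, permMatrix_mul]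

theorem conjTranspose_permSR (n dI dO dR : ℕ) (g : Perm (Fin n)) :
    (permSR n dI dO dR g)ᴴ = permSR n dI dO dR g⁻¹ := by
  simp only [permSR_eq_kronecker, conjTranspose_kronecker, conjTranspose_permMatrix]
  rfl

theorem refProj_eq_single (n : ℕ) : refProj n = single (fun k => k) (fun k => k) 1 := by
  ext r r'
  simp [refProj, single_apply, eq_comm]

theorem refProj_mul_permMatrix_mul_refProj (n : ℕ) (g : Perm (Fin n)) :
    refProj n * (precompPerm _ g).permMatrix ℂ * refProj n = if g = 1 then refProj n else 0 := by
  rw [refProj_eq_single, single_mul_mul_single, permMatrix_precompPerm_apply_id]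
  split_ifs <;> simp

section Rmap

variable {n dI dO : ℕ}

noncomputable abbrev refKron (dR : ℕ)
    (A : Matrix (Fin n → Fin dI × Fin dO) (Fin n → Fin dI × Fin dO) ℂ) :=
  A ⊗ₖ (refProj n ⊗ₖ (1 : Matrix (Fin n → Fin dR) (Fin n → Fin dR) ℂ))

theorem Rmap_eq_sum (dR : ℕ) (A : Matrix (Fin n → Fin dI × Fin dO) (Fin n → Fin dI × Fin dO) ℂ) :
    Rmap n dI dO dR A = ∑ g, permSR n dI dO dR g * refKron dR A * permSR n dI dO dR g⁻¹ := by
  simp only [Rmap, conjTranspose_permSR]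

theorem refKron_mul_permSR_mul_refKron (dR : ℕ)
    (A B : Matrix (Fin n → Fin dI × Fin dO) (Fin n → Fin dI × Fin dO) ℂ) (g : Perm (Fin n)) :
    refKron dR A * permSR n dI dO dR g * refKron dR B =
      if g = 1 then refKron dR (A * B) else 0 := by
  simp only [refKron, permSR_eq_kronecker, ← mul_kronecker_mul, Matrix.mul_one, Matrix.one_mul,
    refProj_mul_permMatrix_mul_refProj]
  split_ifs with hg
  · simp [hg, precompPerm_one]
  · simp

end Rmap

theorem Rmap_mul_general (n dI dO dR : ℕ)
    (A B : Matrix (Fin n → Fin dI × Fin dO) (Fin n → Fin dI × Fin dO) ℂ) :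
    Rmap n dI dO dR A * Rmap n dI dO dR B = Rmap n dI dO dR (A * B) := by
  simp only [Rmap_eq_sum, Finset.sum_mul_sum]
  refine Finset.sum_congr rfl fun g _ => ?_
  calc ∑ h, permSR n dI dO dR g * refKron dR A * permSR n dI dO dR g⁻¹ *
        (permSR n dI dO dR h * refKron dR B * permSR n dI dO dR h⁻¹)
      = ∑ h, permSR n dI dO dR g * (refKron dR A * permSR n dI dO dR (g⁻¹ * h) * refKron dR B) *
          permSR n dI dO dR h⁻¹ := by
        simp only [← permSR_mul, Matrix.mul_assoc]
    _ = ∑ h, if g = h then permSR n dI dO dR g * refKron dR (A * B) * permSR n dI dO dR h⁻¹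
          else 0 := by
        refine Finset.sum_congr rfl fun h _ => ?_
        simp only [refKron_mul_permSR_mul_refKron, inv_mul_eq_one]
        split_ifs <;> simp [Matrix.mul_assoc]
    _ = _ := Fintype.sum_ite_eq g _

/-- `R` is multiplicative: `R(A)·R(B) = R(A·B)`. -/
theorem Rmap_mul (n dI dO dR : ℕ) (hn : 1 ≤ n)
    (A B : Matrix (Fin n → Fin dI × Fin dO) (Fin n → Fin dI × Fin dO) ℂ) :
    Rmap n dI dO dR A * Rmap n dI dO dR B = Rmap n dI dO dR (A * B) :=
  Rmap_mul_general n dI dO dR A B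
end

section
/- Let W be a valid n-partite process matrix on (H_I ⊗ H_O)^{⊗n}, each party having input space H_I and output space H_O. Extend each party k by a reference input space H_{R_I} = ℂ^n and a reference output space H_{R_O}, and let [01…(n−1)] be the rank-one projector onto |0⟩⊗|1⟩⊗…⊗|n−1⟩ in (ℂ^n)^{⊗n}. Then the operator W ⊗ [01…(n−1)]^{R_I} ⊗ 1^{R_O} (with tensor factors reordered so that party k carries input H_I ⊗ H_{R_I} and output H_O ⊗ H_{R_O}) is a valid n-partite process matrix on the extended spaces. -/
open Matrix ComplexOrder

/-- Tensor product `M_1 ⊗ … ⊗ M_n` of a family of square matrices, realised on the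
product index type. -/
noncomputable def tensorAll {n : ℕ} {γ : Fin n → Type} [∀ k, Fintype (γ k)]
    (M : ∀ k, Matrix (γ k) (γ k) ℂ) : Matrix (∀ k, γ k) (∀ k, γ k) ℂ :=
  Matrix.of fun f f' => ∏ k, M k (f k) (f' k)

/-- Partial trace over the second (output) tensor factor. -/
noncomputable def ptraceOut {α β : Type} [Fintype β]
    (M : Matrix (α × β) (α × β) ℂ) : Matrix α α ℂ :=
  Matrix.of fun a a' => ∑ b, M (a, b) (a', b)

/-- A valid `n`-partite process matrix on `⨂_k (H_{I_k} ⊗ H_{O_k})`: a positive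
semidefinite operator `W` such that `Tr[W·(M_1 ⊗ … ⊗ M_n)] = 1` for every choice of
positive semidefinite `M_k` with `Tr_{O_k}[M_k] = 1_{I_k}` (Choi matrices of CPTP maps). -/
def IsProcessMatrix {n : ℕ} {ι κ : Fin n → Type}
    [∀ k, Fintype (ι k)] [∀ k, Fintype (κ k)] [∀ k, DecidableEq (ι k)]
    (W : Matrix (∀ k, ι k × κ k) (∀ k, ι k × κ k) ℂ) : Prop :=
  W.PosSemidef ∧
    ∀ M : ∀ k, Matrix (ι k × κ k) (ι k × κ k) ℂ,
      (∀ k, (M k).PosSemidef) → (∀ k, ptraceOut (M k) = 1) →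
        (W * tensorAll M).trace = 1

/-- The operator `W ⊗ [01…(n−1)]^{R_I} ⊗ 1^{R_O}`, with the tensor factors reordered so
that party `k` carries input `H_I ⊗ H_{R_I}` (basis `Fin dI × Fin n`, the reference input
being `ℂ^n`) and output `H_O ⊗ H_{R_O}` (basis `Fin dO × Fin dR`).  The factor
`[01…(n−1)]` is the rank-one projector onto `|0⟩⊗|1⟩⊗…⊗|n−1⟩` in `(ℂ^n)^{⊗n}`, and
`1^{R_O}` the identity on the reference outputs. -/
noncomputable def extendW (n dI dO dR : ℕ)
    (W : Matrix (Fin n → Fin dI × Fin dO) (Fin n → Fin dI × Fin dO) ℂ) :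
    Matrix (Fin n → (Fin dI × Fin n) × (Fin dO × Fin dR))
      (Fin n → (Fin dI × Fin n) × (Fin dO × Fin dR)) ℂ :=
  Matrix.of fun f f' =>
    W (fun k => ((f k).1.1, (f k).2.1)) (fun k => ((f' k).1.1, (f' k).2.1)) *
      (if (∀ k, (f k).1.2 = k) ∧ (∀ k, (f' k).1.2 = k) then 1 else 0) *
      (if (fun k => (f k).2.2) = (fun k => (f' k).2.2) then 1 else 0)

/-! Up to a reordering of tensor factors, `extendW W` is `W ⊗ |j⟩⟨j| ⊗ 1` with
`j = (0, 1, …, n−1)`, hence positive semidefinite. Paired with `M_1 ⊗ … ⊗ M_n` it gives the same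
trace as `W` paired with `N_1 ⊗ … ⊗ N_n`, where `N_k = ⟨k| Tr_{R_O}[M_k] |k⟩`, because the sum over
the reference outputs factorises over the parties. Each `N_k` is again positive semidefinite with
`Tr_O[N_k] = 1`, so the normalisation of `W` applies. -/

open scoped Kronecker

section TraceIdentities

variable {α β : Type} [Fintype α] [Fintype β]

theorem trace_submatrix_equiv_mul {R : Type*} [CommSemiring R] (X : Matrix β β R) (e : α ≃ β)
    (T : Matrix α α R) :
    (X.submatrix e e * T).trace = (X * T.submatrix e.symm e.symm).trace := by
  calc (X.submatrix e e * T).trace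
      = ((X * T.submatrix e.symm e.symm).submatrix e e).trace := by
        rw [← submatrix_mul_equiv X _ e e e]
        simp
    _ = _ := e.sum_comp fun b => (X * T.submatrix e.symm e.symm) b b

theorem trace_kronecker_one_mul [DecidableEq β] (A : Matrix α α ℂ)
    (S : Matrix (α × β) (α × β) ℂ) :
    ((A ⊗ₖ (1 : Matrix β β ℂ)) * S).trace = (A * ptraceOut S).trace := by
  simp only [trace, diag_apply, mul_apply, kroneckerMap_apply, one_apply, mul_ite, mul_one,
    mul_zero, ite_mul, zero_mul, Fintype.sum_prod_type, Finset.sum_ite_eq, Finset.mem_univ,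
    ↓reduceIte, ptraceOut, of_apply, Finset.mul_sum]
  exact Finset.sum_congr rfl fun _ _ => Finset.sum_comm

theorem trace_kronecker_single_mul [DecidableEq β] (A : Matrix α α ℂ) (b : β)
    (S : Matrix (α × β) (α × β) ℂ) :
    ((A ⊗ₖ single b b (1 : ℂ)) * S).trace = (A * S.submatrix (·, b) (·, b)).trace := by
  simp [Matrix.trace, mul_apply, single_apply, Fintype.sum_prod_type, ite_and]

end TraceIdentities

section Reference

variable {α β ρ σ : Type}

/-- `⟨i| Tr_{R_O}[M] |i⟩`: the reference input is projected onto the basis vector `i` and the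
reference output is traced out. -/
noncomputable def reduceRef [Fintype σ] (i : ρ)
    (M : Matrix ((α × ρ) × (β × σ)) ((α × ρ) × (β × σ)) ℂ) : Matrix (α × β) (α × β) ℂ :=
  Matrix.of fun p p' => ∑ s, M ((p.1, i), (p.2, s)) ((p'.1, i), (p'.2, s))

theorem Matrix.PosSemidef.reduceRef [Fintype σ]
    {M : Matrix ((α × ρ) × (β × σ)) ((α × ρ) × (β × σ)) ℂ}
    (hM : M.PosSemidef) (i : ρ) : (_root_.reduceRef i M).PosSemidef := by
  have hsum : _root_.reduceRef i M =
      ∑ s, M.submatrix (fun p => ((p.1, i), (p.2, s))) (fun p => ((p.1, i), (p.2, s))) := by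
    ext p p'
    simp [_root_.reduceRef, sum_apply]
  rw [hsum]
  exact posSemidef_sum _ fun s _ => hM.submatrix _

theorem ptraceOut_reduceRef [Fintype β] [Fintype σ] (i : ρ)
    (M : Matrix ((α × ρ) × (β × σ)) ((α × ρ) × (β × σ)) ℂ) :
    ptraceOut (reduceRef i M) = (ptraceOut M).submatrix (·, i) (·, i) := by
  ext a a'
  simp [ptraceOut, _root_.reduceRef, Fintype.sum_prod_type]

def extendedIndexEquiv (ι : Type) :
    (ι → (α × ρ) × (β × σ)) ≃ ((ι → α × β) × (ι → ρ)) × (ι → σ) where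
  toFun f := ((fun k => ((f k).1.1, (f k).2.1), fun k => (f k).1.2), fun k => (f k).2.2)
  invFun p := fun k => (((p.1.1 k).1, p.1.2 k), ((p.1.1 k).2, p.2 k))
  left_inv _ := rfl
  right_inv _ := rfl

theorem ptraceOut_submatrix_tensorAll {n : ℕ} [Fintype α] [Fintype β] [Fintype ρ] [Fintype σ]
    (M : Fin n → Matrix ((α × ρ) × (β × σ)) ((α × ρ) × (β × σ)) ℂ) (j : Fin n → ρ) :
    (ptraceOut ((tensorAll M).submatrix (extendedIndexEquiv (Fin n)).symm
      (extendedIndexEquiv (Fin n)).symm)).submatrix (·, j) (·, j) =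
      tensorAll fun k => reduceRef (j k) (M k) := by
  ext a a'
  exact (Fintype.prod_sum fun k s => M k (((a k).1, j k), ((a k).2, s))
    (((a' k).1, j k), ((a' k).2, s))).symm

end Reference

theorem extendW_eq_submatrix (n dI dO dR : ℕ)
    (W : Matrix (Fin n → Fin dI × Fin dO) (Fin n → Fin dI × Fin dO) ℂ) :
    extendW n dI dO dR W = ((W ⊗ₖ single (fun k => k) (fun k => k) 1) ⊗ₖ 1).submatrix
      (extendedIndexEquiv (Fin n)) (extendedIndexEquiv (Fin n)) := by
  ext f f'
  simp [extendW, extendedIndexEquiv, single_apply, one_apply, funext_iff, eq_comm]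

theorem Matrix.PosSemidef.extendW {n : ℕ} (dI dO dR : ℕ)
    {W : Matrix (Fin n → Fin dI × Fin dO) (Fin n → Fin dI × Fin dO) ℂ} (hW : W.PosSemidef) :
    (_root_.extendW n dI dO dR W).PosSemidef := by
  have hP : (single (fun k : Fin n => k) (fun k => k) (1 : ℂ)).PosSemidef := by
    rw [← diagonal_single]
    exact .diagonal (Pi.single_nonneg.mpr zero_le_one)
  rw [extendW_eq_submatrix]
  exact ((hW.kronecker hP).kronecker PosSemidef.one).submatrix _

theorem trace_extendW_mul_tensorAll (n dI dO dR : ℕ)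
    (W : Matrix (Fin n → Fin dI × Fin dO) (Fin n → Fin dI × Fin dO) ℂ)
    (M : Fin n → Matrix ((Fin dI × Fin n) × (Fin dO × Fin dR))
      ((Fin dI × Fin n) × (Fin dO × Fin dR)) ℂ) :
    (extendW n dI dO dR W * tensorAll M).trace =
      (W * tensorAll fun k => reduceRef k (M k)).trace := by
  rw [extendW_eq_submatrix, trace_submatrix_equiv_mul, trace_kronecker_one_mul,
    trace_kronecker_single_mul, ptraceOut_submatrix_tensorAll]

/-- extending a valid `n`-partite process matrix `W` by reference systems,
with the reference inputs prepared in the state `|0⟩⊗|1⟩⊗…⊗|n−1⟩` and the identity on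
the reference outputs, yields a valid `n`-partite process matrix on the extended
spaces, where party `k` has input `H_I ⊗ ℂ^n` and output `H_O ⊗ H_{R_O}`. -/
theorem extended_process_is_process (n dI dO dR : ℕ)
    (W : Matrix (Fin n → Fin dI × Fin dO) (Fin n → Fin dI × Fin dO) ℂ)
    (hW : IsProcessMatrix (ι := fun _ => Fin dI) (κ := fun _ => Fin dO) W) :
    IsProcessMatrix (ι := fun _ => Fin dI × Fin n) (κ := fun _ => Fin dO × Fin dR)
      (extendW n dI dO dR W) := by
  refine ⟨hW.1.extendW dI dO dR, fun M hM hMtr => ?_⟩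
  rw [trace_extendW_mul_tensorAll]
  refine hW.2 _ (fun k => (hM k).reduceRef k) fun k => ?_
  rw [ptraceOut_reduceRef, hMtr k]
  exact submatrix_one _ (Prod.mk_left_injective k)
end

section
/- With R the map defined in the context, the operator 1^{SR} − R(1^S) is positive semidefinite, where 1^{SR} is the identity on the combined system–reference space S ⊗ R and 1^S is the identity on the system space S = (H_I ⊗ H_O)^{⊗n}. Consequently, for any positive semidefinite operators M_{i_1},…,M_{i_n} on H_I ⊗ H_O and any real constants N ≥ 1 and d_O > 0, the operator M^inv = R(M_{i_1} ⊗ … ⊗ M_{i_n}) + (1/(N d_O))·(1^{SR} − R(1^S)) is positive semidefinite. -/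
open Matrix Kronecker ComplexOrder

/-!
Conjugation by the permutation unitary `U_g^{SR}` only relabels the basis, so `R(A)` is a sum of
principal submatrices of `A ⊗ [01…(n−1)] ⊗ 1`, which is positive semidefinite when `A` is.
For `A = 1` every summand is diagonal, and the diagonal entry of `R(1)` at a basis vector with
reference label `r : Fin n → Fin n` counts the permutations `g` with `r ∘ g = id`; there is at most
one, so `1 − R(1)` is diagonal with entries in `{0, 1}`.
-/

section tensorAll

variable {n : ℕ} {γ : Fin n → Type} [∀ k, Fintype (γ k)]

theorem tensorAll_mul (A B : ∀ k, Matrix (γ k) (γ k) ℂ) :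
    tensorAll A * tensorAll B = tensorAll fun k => A k * B k := by
  ext f f'
  simp only [tensorAll, mul_apply, of_apply, Fintype.prod_sum, Finset.prod_mul_distrib]

theorem tensorAll_conjTranspose (A : ∀ k, Matrix (γ k) (γ k) ℂ) :
    (tensorAll A)ᴴ = tensorAll fun k => (A k)ᴴ := by
  ext f f'
  simp only [tensorAll, conjTranspose_apply, of_apply, star_prod]

open scoped MatrixOrder in
theorem tensorAll_posSemidef {M : ∀ k, Matrix (γ k) (γ k) ℂ} (hM : ∀ k, (M k).PosSemidef) :
    (tensorAll M).PosSemidef := by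
  classical
  choose B hB using fun k => CStarAlgebra.nonneg_iff_eq_star_mul_self.mp (hM k).nonneg
  have hM' : M = fun k => (B k)ᴴ * B k := funext hB
  rw [hM', ← tensorAll_mul, ← tensorAll_conjTranspose]
  exact posSemidef_conjTranspose_mul_self _

end tensorAll

theorem Equiv.Perm.eq_of_comp_eq_id {ι : Type*} {r : ι → ι} {g h : Equiv.Perm ι}
    (hg : r ∘ g = id) (hh : r ∘ h = id) : g = h := by
  have eq_symm : ∀ g : Equiv.Perm ι, r ∘ g = id → r = g.symm := fun g hg =>
    funext fun k => by simpa using congrFun hg (g.symm k)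
  exact inv_injective <| DFunLike.coe_injective <| (eq_symm g hg).symm.trans (eq_symm h hh)

theorem refProj_eq_diagonal (n : ℕ) :
    refProj n = diagonal fun r => if r = (fun k => k) then 1 else 0 := by
  ext r r'
  simp only [refProj, diagonal_apply, of_apply]
  grind

theorem refProj_posSemidef (n : ℕ) : (refProj n).PosSemidef := by
  rw [refProj_eq_diagonal]
  exact PosSemidef.diagonal fun r => by split_ifs <;> simp

def relabel {ι α β δ : Type*} (g : Equiv.Perm ι) :
    (ι → α) × (ι → β) × (ι → δ) → (ι → α) × (ι → β) × (ι → δ) :=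
  fun p => (p.1 ∘ g, p.2.1 ∘ g, p.2.2 ∘ g)

theorem relabel_injective {ι α β δ : Type*} (g : Equiv.Perm ι) :
    Function.Injective (relabel (α := α) (β := β) (δ := δ) g) :=
  g.surjective.injective_comp_right.prodMap
    (g.surjective.injective_comp_right.prodMap g.surjective.injective_comp_right)

section Rmap

variable {n dI dO dR : ℕ}

theorem permSR_mul_mul_conjTranspose (g : Equiv.Perm (Fin n))
    (X : Matrix ((Fin n → Fin dI × Fin dO) × (Fin n → Fin n) × (Fin n → Fin dR))
      ((Fin n → Fin dI × Fin dO) × (Fin n → Fin n) × (Fin n → Fin dR)) ℂ) :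
    permSR n dI dO dR g * X * (permSR n dI dO dR g)ᴴ = X.submatrix (relabel g) (relabel g) := by
  ext p q
  simp [mul_apply, permSR, relabel]

theorem Rmap_eq_sum_submatrix (A : Matrix (Fin n → Fin dI × Fin dO) (Fin n → Fin dI × Fin dO) ℂ) :
    Rmap n dI dO dR A = ∑ g : Equiv.Perm (Fin n),
      (A ⊗ₖ (refProj n ⊗ₖ (1 : Matrix (Fin n → Fin dR) (Fin n → Fin dR) ℂ))).submatrix
        (relabel g) (relabel g) := by
  simp only [Rmap, permSR_mul_mul_conjTranspose]

theorem Rmap_posSemidef {A : Matrix (Fin n → Fin dI × Fin dO) (Fin n → Fin dI × Fin dO) ℂ}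
    (hA : A.PosSemidef) : (Rmap n dI dO dR A).PosSemidef := by
  rw [Rmap_eq_sum_submatrix]
  exact posSemidef_sum _ fun g _ =>
    (hA.kronecker ((refProj_posSemidef n).kronecker .one)).submatrix _

open Finset in
theorem Rmap_one :
    Rmap n dI dO dR 1 = diagonal fun p =>
      (#{g : Equiv.Perm (Fin n) | p.2.1 ∘ g = id} : ℂ) := by
  rw [Rmap_eq_sum_submatrix, refProj_eq_diagonal, ← diagonal_one, ← diagonal_one,
    diagonal_kronecker_diagonal, diagonal_kronecker_diagonal]
  simp only [submatrix_diagonal _ _ (relabel_injective _)]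
  refine (map_sum (diagonalAddMonoidHom _ ℂ) _ _).symm.trans (congrArg diagonal ?_)
  ext p
  simp only [relabel, Function.comp_apply, one_mul, mul_one, Finset.sum_apply]
  exact (natCast_card_filter _ _).symm

end Rmap

open Finset in
theorem one_sub_Rmap_one_posSemidef (n dI dO dR : ℕ) :
    ((1 : Matrix ((Fin n → Fin dI × Fin dO) × (Fin n → Fin n) × (Fin n → Fin dR))
      ((Fin n → Fin dI × Fin dO) × (Fin n → Fin n) × (Fin n → Fin dR)) ℂ) -
        Rmap n dI dO dR 1).PosSemidef := by
  rw [Rmap_one, ← diagonal_one, diagonal_sub]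
  refine PosSemidef.diagonal fun p => sub_nonneg.mpr ?_
  have h : #{g : Equiv.Perm (Fin n) | p.2.1 ∘ g = id} ≤ 1 :=
    card_le_one.mpr fun g hg h hh =>
      Equiv.Perm.eq_of_comp_eq_id (mem_filter.mp hg).2 (mem_filter.mp hh).2
  exact Nat.cast_le_one.mpr h

/-- the operator `1^{SR} − R(1^S)` is positive semidefinite, and
consequently for any positive semidefinite local operators `M_{i_1}, …, M_{i_n}` and
real constants `N ≥ 1`, `d_O > 0`, the invariant measurement operator
`M^inv = R(M_{i_1} ⊗ … ⊗ M_{i_n}) + (1/(N d_O))·(1^{SR} − R(1^S))` is positive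
semidefinite. -/
theorem invariant_measurement_posSemidef (n dI dO dR : ℕ)
    (M : Fin n → Matrix (Fin dI × Fin dO) (Fin dI × Fin dO) ℂ)
    (hM : ∀ k, (M k).PosSemidef)
    (N d_O : ℝ) (hN : 1 ≤ N) (hd : 0 < d_O) :
    ((1 : Matrix ((Fin n → Fin dI × Fin dO) × (Fin n → Fin n) × (Fin n → Fin dR))
          ((Fin n → Fin dI × Fin dO) × (Fin n → Fin n) × (Fin n → Fin dR)) ℂ) -
        Rmap n dI dO dR 1).PosSemidef ∧
      (Rmap n dI dO dR (tensorAll M) +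
          ((1 / (N * d_O) : ℝ) : ℂ) • ((1 : Matrix _ _ ℂ) - Rmap n dI dO dR 1)).PosSemidef := by
  have hR1 := one_sub_Rmap_one_posSemidef n dI dO dR
  have hc : (0 : ℝ) ≤ 1 / (N * d_O) :=
    one_div_nonneg.mpr (mul_nonneg (zero_le_one.trans hN) hd.le)
  exact ⟨hR1, (Rmap_posSemidef (tensorAll_posSemidef hM)).add
    (hR1.smul (Complex.zero_le_real.mpr hc))⟩
end

section
/- Consider bipartite processes where each of the four local spaces H_{A_I}, H_{A_O}, H_{B_I}, H_{B_O} is ℂ², and let U_swap be the unitary on (ℂ² ⊗ ℂ²) ⊗ (ℂ² ⊗ ℂ²) with U_swap(a⊗b⊗c⊗d) = c⊗d⊗a⊗b. Let P_+ (respectively P_−) be the orthogonal projector onto the +1 (respectively −1) eigenspace of U_swap. Then there is no valid bipartite process matrix W satisfying W = P_+ W P_+, and there is no valid bipartite process matrix W satisfying W = P_− W P_−. That is, no valid bipartite qubit process lies entirely in the symmetric or entirely in the antisymmetric representation of S_2. -/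
open Matrix Kronecker ComplexOrder

/-- A valid bipartite process matrix on
`(H_{A_I} ⊗ H_{A_O}) ⊗ (H_{B_I} ⊗ H_{B_O})`: positive semidefinite `W` with
`Tr[W·(M ⊗ N)] = 1` for all positive semidefinite `M`, `N` with `Tr_{A_O}[M] = 1_{A_I}`
and `Tr_{B_O}[N] = 1_{B_I}`. -/
def IsBipartiteProcessMatrix {α β γ δ : Type}
    [Fintype α] [Fintype β] [Fintype γ] [Fintype δ] [DecidableEq α] [DecidableEq γ]
    (W : Matrix ((α × β) × (γ × δ)) ((α × β) × (γ × δ)) ℂ) : Prop :=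
  W.PosSemidef ∧
    ∀ (M : Matrix (α × β) (α × β) ℂ) (N : Matrix (γ × δ) (γ × δ) ℂ),
      M.PosSemidef → N.PosSemidef → ptraceOut M = 1 → ptraceOut N = 1 →
        (W * (M ⊗ₖ N)).trace = 1

/-- The swap unitary on `(ℂ² ⊗ ℂ²) ⊗ (ℂ² ⊗ ℂ²)`, exchanging the two laboratory factors:
`U_swap (a⊗b⊗c⊗d) = c⊗d⊗a⊗b`. -/
noncomputable def Uswap :
    Matrix ((Fin 2 × Fin 2) × (Fin 2 × Fin 2)) ((Fin 2 × Fin 2) × (Fin 2 × Fin 2)) ℂ :=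
  Matrix.of fun p q => if q = (p.2, p.1) then 1 else 0

/-!
Antisymmetric case: the product `Φ ⊗ Φ` of two unnormalised maximally entangled vectors is
fixed by `U_swap`, so `W U_swap = -W` forces `W (Φ ⊗ Φ) = 0`; but when both parties apply the
identity channel, whose Choi matrix is `|Φ⟩⟨Φ|`, the normalisation reads
`⟨Φ ⊗ Φ| W |Φ ⊗ Φ⟩ = 1`.

Symmetric case: the normalisation forces `Tr W = 4` and kills the Pauli components
`σᵢ ⊗ σⱼ ⊗ σᵢ ⊗ σⱼ` with `j ≠ 0`, where `σⱼ` acts on an output. Expanding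
`U_swap = ¼ ∑ᵢⱼ σᵢ ⊗ σⱼ ⊗ σᵢ ⊗ σⱼ` therefore leaves `Tr[W U_swap] = ½ Tr[W S]`, with `S` the
swap of the two inputs. As `S` is a Hermitian involution and `W ≥ 0`, `Tr[W S] ≤ Tr W`, so
`Tr[W U_swap] ≤ 2 < Tr W`, which contradicts `W U_swap = W`.

In both cases `W = P W P`, with `P` the projector onto the `±1` eigenspace, gives
`W U_swap = ±W`.
-/

open Equiv

namespace Matrix

lemma sub_kronecker {R l m n p : Type*} [Ring R] (A₁ A₂ : Matrix l m R) (B : Matrix n p R) :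
    (A₁ - A₂) ⊗ₖ B = A₁ ⊗ₖ B - A₂ ⊗ₖ B := by
  ext
  simp [sub_mul]

lemma kronecker_sub {R l m n p : Type*} [Ring R] (A : Matrix l m R) (B₁ B₂ : Matrix n p R) :
    A ⊗ₖ (B₁ - B₂) = A ⊗ₖ B₁ - A ⊗ₖ B₂ := by
  ext
  simp [mul_sub]

lemma vecMulVec_kronecker_vecMulVec {R l m n p : Type*} [CommMonoid R]
    (a : l → R) (b : m → R) (c : n → R) (d : p → R) :
    vecMulVec a b ⊗ₖ vecMulVec c d =
      vecMulVec (fun i => a i.1 * c i.2) (fun j => b j.1 * d j.2) := by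
  ext
  simp [vecMulVec_apply, mul_mul_mul_comm]

lemma IsHermitian.kronecker {R m n : Type*} [CommRing R] [StarRing R] {A : Matrix m m R}
    {B : Matrix n n R} (hA : A.IsHermitian) (hB : B.IsHermitian) : (A ⊗ₖ B).IsHermitian := by
  rw [IsHermitian, conjTranspose_kronecker, hA.eq, hB.eq]

variable {n : Type} [Fintype n]

lemma IsHermitian.posSemidef_one_add_of_mul_self_eq_one [DecidableEq n] {m : Matrix n n ℂ}
    (hm : m.IsHermitian) (hm2 : m * m = 1) : (1 + m).PosSemidef := by
  have h : 1 + m = (1 / 2 : ℂ) • ((1 + m)ᴴ * (1 + m)) := by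
    rw [conjTranspose_add, conjTranspose_one, hm.eq, add_mul, one_mul, mul_add, mul_one, hm2]
    module
  rw [h]
  exact (posSemidef_conjTranspose_mul_self _).smul (by positivity)

lemma PosSemidef.trace_mul_le_trace_of_mul_self_eq_one [DecidableEq n] {W R : Matrix n n ℂ}
    (hW : W.PosSemidef) (hR : R.IsHermitian) (hR2 : R * R = 1) : (W * R).trace ≤ W.trace := by
  have hsq : (1 - R) * (1 - R) = (2 : ℂ) • (1 - R) := by
    simp only [sub_mul, mul_sub, one_mul, mul_one, hR2]
    module
  have h : W.trace - (W * R).trace = (1 / 2 : ℂ) * ((1 - R)ᴴ * W * (1 - R)).trace := by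
    rw [conjTranspose_sub, conjTranspose_one, hR.eq, trace_mul_cycle, hsq, smul_mul_assoc,
      trace_smul, sub_mul, one_mul, trace_sub, trace_mul_comm R, smul_eq_mul]
    ring
  rw [← sub_nonneg, h]
  exact mul_nonneg (by positivity) (hW.conjTranspose_mul_mul_same (1 - R)).trace_nonneg

lemma mul_eq_smul_of_forall_mulVec_eq_self {P U : Matrix n n ℂ} {c : ℂ} (hP : P * P = P)
    (h : ∀ v, P *ᵥ v = v → U *ᵥ v = c • v) : U * P = c • P := by
  refine ext_iff_mulVec.mpr fun v => ?_
  rw [← mulVec_mulVec, h _ (by rw [mulVec_mulVec, hP]), smul_mulVec]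

lemma mul_eq_smul_of_eq_mul_mul {W P U : Matrix n n ℂ} {c : ℂ} (hP : P.IsHermitian)
    (hU : U.IsHermitian) (hc : star c = c) (hUP : U * P = c • P) (hW : W = P * W * P) :
    W * U = c • W := by
  have hPU : P * U = c • P := by
    simpa [conjTranspose_mul, hP.eq, hU.eq, hc] using congrArg conjTranspose hUP
  calc W * U = P * W * (P * U) := by conv_lhs => rw [hW, mul_assoc]
    _ = c • W := by rw [hPU, Matrix.mul_smul, ← hW]

end Matrix

namespace Equiv

lemma prodComm_mul_self (α : Type) : (prodComm α α : Perm (α × α)) * prodComm α α = 1 := by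
  ext <;> rfl

variable {n : Type} [DecidableEq n] {σ : Perm n}

lemma Perm.isHermitian_permMatrix_of_mul_self (hσ : σ * σ = 1) :
    (σ.permMatrix ℂ).IsHermitian := by
  rw [IsHermitian, conjTranspose_permMatrix, inv_eq_of_mul_eq_one_left hσ]

lemma Perm.permMatrix_mul_self_of_mul_self [Fintype n] (hσ : σ * σ = 1) :
    σ.permMatrix ℂ * σ.permMatrix ℂ = 1 := by
  rw [← permMatrix_mul, hσ, permMatrix_one]

end Equiv

section PartialTrace

variable {α β : Type} [Fintype β]

lemma ptraceOut_add (M N : Matrix (α × β) (α × β) ℂ) :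
    ptraceOut (M + N) = ptraceOut M + ptraceOut N := by
  ext a a'
  simp [ptraceOut, Finset.sum_add_distrib]

lemma ptraceOut_smul (c : ℂ) (M : Matrix (α × β) (α × β) ℂ) :
    ptraceOut (c • M) = c • ptraceOut M := by
  ext a a'
  simp [ptraceOut, Finset.mul_sum]

lemma ptraceOut_neg (M : Matrix (α × β) (α × β) ℂ) : ptraceOut (-M) = -ptraceOut M := by
  ext a a'
  simp [ptraceOut]

lemma ptraceOut_one [DecidableEq α] [DecidableEq β] :
    ptraceOut (1 : Matrix (α × β) (α × β) ℂ) = (Fintype.card β : ℂ) • 1 := by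
  ext a a'
  by_cases h : a = a' <;> simp [ptraceOut, one_apply, h]

lemma ptraceOut_kronecker (A : Matrix α α ℂ) (B : Matrix β β ℂ) :
    ptraceOut (A ⊗ₖ B) = B.trace • A := by
  ext a a'
  simp [ptraceOut, trace, ← Finset.mul_sum, mul_comm]

end PartialTrace

def IsCPTPChoiMatrix {α β : Type} [Fintype β] [DecidableEq α]
    (M : Matrix (α × β) (α × β) ℂ) : Prop :=
  M.PosSemidef ∧ ptraceOut M = 1

section ChoiMatrix

variable {α β : Type} [Fintype β] [DecidableEq α] [DecidableEq β]

lemma isCPTPChoiMatrix_inv_card_smul_one [Nonempty β] :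
    IsCPTPChoiMatrix ((Fintype.card β : ℂ)⁻¹ • (1 : Matrix (α × β) (α × β) ℂ)) := by
  refine ⟨PosSemidef.one.smul (by positivity), ?_⟩
  rw [ptraceOut_smul, ptraceOut_one, smul_smul, inv_mul_cancel₀ (by simp), one_smul]

lemma isCPTPChoiMatrix_inv_card_smul_one_add [Fintype α] [Nonempty β]
    {m : Matrix (α × β) (α × β) ℂ} (hm : m.IsHermitian) (hm2 : m * m = 1)
    (hmt : ptraceOut m = 0) : IsCPTPChoiMatrix ((Fintype.card β : ℂ)⁻¹ • (1 + m)) := by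
  refine ⟨(hm.posSemidef_one_add_of_mul_self_eq_one hm2).smul (by positivity), ?_⟩
  rw [ptraceOut_smul, ptraceOut_add, hmt, add_zero, ptraceOut_one, smul_smul,
    inv_mul_cancel₀ (by simp), one_smul]

lemma inv_card_smul_one_add_sub_inv_card_smul_one_add_neg (m : Matrix (α × β) (α × β) ℂ) :
    (Fintype.card β : ℂ)⁻¹ • (1 + m) - (Fintype.card β : ℂ)⁻¹ • (1 + -m) =
      (2 / Fintype.card β : ℂ) • m := by
  rw [← smul_sub, add_sub_add_left_eq_sub, sub_neg_eq_add, ← two_smul ℂ, smul_smul,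
    inv_mul_eq_div]

end ChoiMatrix

def maxEntangledVec (α : Type) [DecidableEq α] : α × α → ℂ :=
  fun p => if p.1 = p.2 then 1 else 0

lemma isCPTPChoiMatrix_vecMulVec_maxEntangledVec {α : Type} [Fintype α] [DecidableEq α] :
    IsCPTPChoiMatrix (vecMulVec (maxEntangledVec α) (star (maxEntangledVec α))) := by
  refine ⟨posSemidef_vecMulVec_self_star _, ?_⟩
  ext a a'
  simp [ptraceOut, vecMulVec_apply, maxEntangledVec, one_apply]

namespace IsBipartiteProcessMatrix

variable {α β γ δ : Type} [Fintype α] [Fintype β] [Fintype γ] [Fintype δ]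
  [DecidableEq α] [DecidableEq γ] {W : Matrix ((α × β) × (γ × δ)) ((α × β) × (γ × δ)) ℂ}

lemma trace_mul_kronecker (hW : IsBipartiteProcessMatrix W) {M : Matrix (α × β) (α × β) ℂ}
    {N : Matrix (γ × δ) (γ × δ) ℂ} (hM : IsCPTPChoiMatrix M) (hN : IsCPTPChoiMatrix N) :
    (W * (M ⊗ₖ N)).trace = 1 :=
  hW.2 M N hM.1 hN.1 hM.2 hN.2

lemma trace_eq [DecidableEq β] [DecidableEq δ] [Nonempty β] [Nonempty δ]
    (hW : IsBipartiteProcessMatrix W) : W.trace = Fintype.card β * Fintype.card δ := by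
  have h := hW.trace_mul_kronecker isCPTPChoiMatrix_inv_card_smul_one
    isCPTPChoiMatrix_inv_card_smul_one
  rw [smul_kronecker, kronecker_smul, one_kronecker_one, smul_smul, Matrix.mul_smul,
    Matrix.mul_one, trace_smul, smul_eq_mul] at h
  field_simp at h
  exact h

lemma trace_mul_kronecker_sub_eq_zero (hW : IsBipartiteProcessMatrix W)
    {M₁ M₂ : Matrix (α × β) (α × β) ℂ} {N₁ N₂ : Matrix (γ × δ) (γ × δ) ℂ}
    (hM₁ : IsCPTPChoiMatrix M₁) (hM₂ : IsCPTPChoiMatrix M₂)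
    (hN₁ : IsCPTPChoiMatrix N₁) (hN₂ : IsCPTPChoiMatrix N₂) :
    (W * ((M₁ - M₂) ⊗ₖ (N₁ - N₂))).trace = 0 := by
  simp only [sub_kronecker, kronecker_sub, Matrix.mul_sub, trace_sub,
    hW.trace_mul_kronecker hM₁ hN₁, hW.trace_mul_kronecker hM₁ hN₂,
    hW.trace_mul_kronecker hM₂ hN₁, hW.trace_mul_kronecker hM₂ hN₂, sub_self]

/-- `m = (d / 2) • ((1 + m) / d - (1 - m) / d)` is a multiple of a difference of Choi matrices,
and similarly for `n`. -/
lemma trace_mul_kronecker_eq_zero_of_ptraceOut_eq_zero [DecidableEq β] [DecidableEq δ]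
    [Nonempty β] [Nonempty δ] (hW : IsBipartiteProcessMatrix W) {m : Matrix (α × β) (α × β) ℂ}
    {n : Matrix (γ × δ) (γ × δ) ℂ} (hm : m.IsHermitian) (hm2 : m * m = 1)
    (hmt : ptraceOut m = 0) (hn : n.IsHermitian) (hn2 : n * n = 1) (hnt : ptraceOut n = 0) :
    (W * (m ⊗ₖ n)).trace = 0 := by
  have h := hW.trace_mul_kronecker_sub_eq_zero
    (isCPTPChoiMatrix_inv_card_smul_one_add hm hm2 hmt)
    (isCPTPChoiMatrix_inv_card_smul_one_add hm.neg (by rwa [neg_mul_neg])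
      (by rw [ptraceOut_neg, hmt, neg_zero]))
    (isCPTPChoiMatrix_inv_card_smul_one_add hn hn2 hnt)
    (isCPTPChoiMatrix_inv_card_smul_one_add hn.neg (by rwa [neg_mul_neg])
      (by rw [ptraceOut_neg, hnt, neg_zero]))
  rw [inv_card_smul_one_add_sub_inv_card_smul_one_add_neg,
    inv_card_smul_one_add_sub_inv_card_smul_one_add_neg, smul_kronecker, kronecker_smul,
    Matrix.mul_smul, Matrix.mul_smul, trace_smul, trace_smul, smul_eq_mul, smul_eq_mul] at h
  simpa using h

end IsBipartiteProcessMatrix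

theorem IsBipartiteProcessMatrix.mul_permMatrix_prodComm_ne_neg {α : Type} [Fintype α]
    [DecidableEq α] {W : Matrix ((α × α) × (α × α)) ((α × α) × (α × α)) ℂ}
    (hW : IsBipartiteProcessMatrix W) :
    W * Perm.permMatrix ℂ (prodComm (α × α) (α × α)) ≠ -W := by
  intro hWU
  set Φ := maxEntangledVec α
  set Ψ : (α × α) × (α × α) → ℂ := fun p => Φ p.1 * Φ p.2
  have hΨ : Perm.permMatrix ℂ (prodComm (α × α) (α × α)) *ᵥ Ψ = Ψ := by
    ext p
    simp [permMatrix_mulVec, Ψ, mul_comm]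
  have hWΨ : W *ᵥ Ψ = 0 := by
    refine self_eq_neg.mp ?_
    conv_lhs => rw [← hΨ, mulVec_mulVec, hWU, neg_mulVec]
  have h := hW.trace_mul_kronecker isCPTPChoiMatrix_vecMulVec_maxEntangledVec
    isCPTPChoiMatrix_vecMulVec_maxEntangledVec
  rw [vecMulVec_kronecker_vecMulVec, mul_vecMulVec, hWΨ, trace_vecMulVec, zero_dotProduct] at h
  exact zero_ne_one h

def pauli : Fin 4 → Matrix (Fin 2) (Fin 2) ℂ :=
  ![1, !![0, 1; 1, 0], !![0, -Complex.I; Complex.I, 0], !![1, 0; 0, -1]]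

lemma pauli_zero : pauli 0 = 1 := rfl

lemma isHermitian_pauli (i : Fin 4) : (pauli i).IsHermitian := by
  fin_cases i <;> ext a b <;> fin_cases a <;> fin_cases b <;> simp [pauli]

lemma pauli_mul_self (i : Fin 4) : pauli i * pauli i = 1 := by
  fin_cases i <;> ext a b <;> fin_cases a <;> fin_cases b <;> simp [pauli, mul_apply]

lemma trace_pauli {i : Fin 4} (hi : i ≠ 0) : (pauli i).trace = 0 := by
  fin_cases i <;> simp_all [pauli, trace]

lemma sum_pauli_mul_pauli (a b c d : Fin 2) :
    ∑ i, pauli i a b * pauli i c d = if a = d ∧ b = c then 2 else 0 := by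
  fin_cases a <;> fin_cases b <;> fin_cases c <;> fin_cases d <;>
    simp [Fin.sum_univ_four, pauli] <;> norm_num

def swapInputs (α β : Type) : Perm ((α × β) × (α × β)) where
  toFun p := ((p.2.1, p.1.2), (p.1.1, p.2.2))
  invFun p := ((p.2.1, p.1.2), (p.1.1, p.2.2))
  left_inv _ := rfl
  right_inv _ := rfl

lemma swapInputs_mul_self (α β : Type) : swapInputs α β * swapInputs α β = 1 := by
  ext <;> rfl

lemma two_smul_permMatrix_swapInputs :
    (2 : ℂ) • Perm.permMatrix ℂ (swapInputs (Fin 2) (Fin 2)) =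
      ∑ i, (pauli i ⊗ₖ 1) ⊗ₖ (pauli i ⊗ₖ 1) := by
  ext ⟨⟨a, b⟩, c, d⟩ ⟨⟨e, f⟩, g, h⟩
  simp only [Matrix.smul_apply, Matrix.sum_apply, kroneckerMap_apply]
  simp_rw [mul_mul_mul_comm (pauli _ a e), ← Finset.sum_mul, sum_pauli_mul_pauli]
  simp [PEquiv.toMatrix_apply, swapInputs, one_apply, Prod.ext_iff]
  grind

lemma Uswap_eq_permMatrix :
    Uswap = Perm.permMatrix ℂ (prodComm (Fin 2 × Fin 2) (Fin 2 × Fin 2)) := by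
  ext p q
  simp [Uswap, Prod.swap, eq_comm]

lemma four_smul_Uswap :
    (4 : ℂ) • Uswap = ∑ i, ∑ j, (pauli i ⊗ₖ pauli j) ⊗ₖ (pauli i ⊗ₖ pauli j) := by
  ext ⟨⟨a, b⟩, c, d⟩ ⟨⟨e, f⟩, g, h⟩
  simp only [Matrix.smul_apply, Matrix.sum_apply, kroneckerMap_apply]
  simp_rw [mul_mul_mul_comm (pauli _ a e), ← Finset.sum_mul_sum, sum_pauli_mul_pauli]
  simp [Uswap, Prod.ext_iff]
  grind

namespace IsBipartiteProcessMatrix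

variable {W : Matrix ((Fin 2 × Fin 2) × (Fin 2 × Fin 2)) ((Fin 2 × Fin 2) × (Fin 2 × Fin 2)) ℂ}

lemma two_mul_trace_mul_Uswap (hW : IsBipartiteProcessMatrix W) :
    2 * (W * Uswap).trace = (W * Perm.permMatrix ℂ (swapInputs (Fin 2) (Fin 2))).trace := by
  have hvanish : ∀ i j, j ≠ 0 →
      (W * ((pauli i ⊗ₖ pauli j) ⊗ₖ (pauli i ⊗ₖ pauli j))).trace = 0 := by
    intro i j hj
    have hH := (isHermitian_pauli i).kronecker (isHermitian_pauli j)
    have hsq : (pauli i ⊗ₖ pauli j) * (pauli i ⊗ₖ pauli j) = 1 := by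
      rw [← mul_kronecker_mul, pauli_mul_self, pauli_mul_self, one_kronecker_one]
    have hpt : ptraceOut (pauli i ⊗ₖ pauli j) = 0 := by
      rw [ptraceOut_kronecker, trace_pauli hj, zero_smul]
    exact hW.trace_mul_kronecker_eq_zero_of_ptraceOut_eq_zero hH hsq hpt hH hsq hpt
  have h : 4 * (W * Uswap).trace =
      2 * (W * Perm.permMatrix ℂ (swapInputs (Fin 2) (Fin 2))).trace :=
    calc 4 * (W * Uswap).trace = (W * ((4 : ℂ) • Uswap)).trace := by
          rw [Matrix.mul_smul, trace_smul, smul_eq_mul]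
      _ = ∑ i, ∑ j, (W * ((pauli i ⊗ₖ pauli j) ⊗ₖ (pauli i ⊗ₖ pauli j))).trace := by
          simp only [four_smul_Uswap, Matrix.mul_sum, trace_sum]
      _ = ∑ i, (W * ((pauli i ⊗ₖ 1) ⊗ₖ (pauli i ⊗ₖ 1))).trace := by
          refine Finset.sum_congr rfl fun i _ => ?_
          rw [Finset.sum_eq_single 0 (fun j _ hj => hvanish i j hj) (by simp), pauli_zero]
      _ = (W * ((2 : ℂ) • Perm.permMatrix ℂ (swapInputs (Fin 2) (Fin 2)))).trace := by
          simp only [two_smul_permMatrix_swapInputs, Matrix.mul_sum, trace_sum]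
      _ = 2 * (W * Perm.permMatrix ℂ (swapInputs (Fin 2) (Fin 2))).trace := by
          rw [Matrix.mul_smul, trace_smul, smul_eq_mul]
  linear_combination h / 2

theorem mul_Uswap_ne_self (hW : IsBipartiteProcessMatrix W) : W * Uswap ≠ W := by
  intro hWU
  have htr : W.trace = 4 := by
    rw [hW.trace_eq]
    norm_num
  have hle := hW.1.trace_mul_le_trace_of_mul_self_eq_one
    (Perm.isHermitian_permMatrix_of_mul_self (swapInputs_mul_self _ _))
    (Perm.permMatrix_mul_self_of_mul_self (swapInputs_mul_self _ _))
  rw [← hW.two_mul_trace_mul_Uswap, hWU, htr] at hle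
  norm_num at hle

end IsBipartiteProcessMatrix

/-- no valid bipartite qubit process matrix lies entirely in the
symmetric (`+1`) eigenspace of `U_swap`, and none lies entirely in the antisymmetric
(`−1`) eigenspace: for `P₊` (resp. `P₋`) the orthogonal projector onto the `+1` (resp.
`−1`) eigenspace of `U_swap`, there is no valid bipartite process matrix `W` with
`W = P₊ W P₊`, and none with `W = P₋ W P₋`. -/
theorem no_symmetric_or_antisymmetric_bipartite_qubit_process :
    (∀ Pp : Matrix ((Fin 2 × Fin 2) × (Fin 2 × Fin 2)) ((Fin 2 × Fin 2) × (Fin 2 × Fin 2)) ℂ,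
      Pp.IsHermitian → Pp * Pp = Pp →
      (∀ v : (Fin 2 × Fin 2) × (Fin 2 × Fin 2) → ℂ,
        Pp.mulVec v = v ↔ Uswap.mulVec v = v) →
      ¬ ∃ W, IsBipartiteProcessMatrix W ∧ W = Pp * W * Pp) ∧
    (∀ Pm : Matrix ((Fin 2 × Fin 2) × (Fin 2 × Fin 2)) ((Fin 2 × Fin 2) × (Fin 2 × Fin 2)) ℂ,
      Pm.IsHermitian → Pm * Pm = Pm →
      (∀ v : (Fin 2 × Fin 2) × (Fin 2 × Fin 2) → ℂ,
        Pm.mulVec v = v ↔ Uswap.mulVec v = (-1 : ℂ) • v) →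
      ¬ ∃ W, IsBipartiteProcessMatrix W ∧ W = Pm * W * Pm) := by
  have hU : Uswap.IsHermitian :=
    Uswap_eq_permMatrix ▸ Perm.isHermitian_permMatrix_of_mul_self (prodComm_mul_self _)
  refine ⟨?_, ?_⟩
  · rintro P hP hPP hPU ⟨W, hW, hWP⟩
    have hUP : Uswap * P = (1 : ℂ) • P :=
      mul_eq_smul_of_forall_mulVec_eq_self hPP fun v hv => by rw [one_smul]; exact (hPU v).1 hv
    exact hW.mul_Uswap_ne_self
      (by simpa using mul_eq_smul_of_eq_mul_mul hP hU (star_one ℂ) hUP hWP)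
  · rintro P hP hPP hPU ⟨W, hW, hWP⟩
    have hUP := mul_eq_smul_of_forall_mulVec_eq_self hPP fun v hv => (hPU v).1 hv
    refine hW.mul_permMatrix_prodComm_ne_neg ?_
    rw [← Uswap_eq_permMatrix, mul_eq_smul_of_eq_mul_mul hP hU (by simp) hUP hWP, neg_one_smul]
end

section
/- Let n ≥ 2 and consider n-partite processes where every local input and output space is ℂ², so the total space is ((ℂ² ⊗ ℂ²))^{⊗n} with the k-th factor ℂ² ⊗ ℂ² comprising the input and output of party k. For g ∈ S_n, let U_g be the unitary permuting the n factors ℂ² ⊗ ℂ² according to g, let P_sym be the orthogonal projector onto {v : U_g v = v for all g ∈ S_n}, and let P_asym be the orthogonal projector onto {v : U_g v = sgn(g) v for all g ∈ S_n}. Then there is no valid n-partite process matrix W with W = P_sym W P_sym, and there is no valid n-partite process matrix W with W = P_asym W P_asym. That is, no valid n-partite qubit process lies entirely in the symmetric or entirely in the antisymmetric representation of S_n. -/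
open Matrix ComplexOrder

/-- The unitary `U_g` on `((ℂ² ⊗ ℂ²))^{⊗n}` permuting the `n` laboratory factors
`ℂ² ⊗ ℂ²` (the `k`-th factor comprising the input and output of party `k`) according to
`g ∈ S_n`. -/
noncomputable def permMat (n : ℕ) (g : Equiv.Perm (Fin n)) :
    Matrix (Fin n → Fin 2 × Fin 2) (Fin n → Fin 2 × Fin 2) ℂ :=
  Matrix.of fun p q => if q = p ∘ g then 1 else 0

/-- The character by which (anti)symmetric vectors transform: `1` in the symmetric case
(`ε = false`) and `sgn(g)` in the antisymmetric case (`ε = true`). -/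
noncomputable def sgnChar {n : ℕ} (ε : Bool) (g : Equiv.Perm (Fin n)) : ℂ :=
  if ε then ((Equiv.Perm.sign g : ℤ) : ℂ) else 1

/-!
Write `χ` for the character `sgnChar ε`. The columns of `P` are `χ`-isotypic, so `W = P W P`
gives `U_g W = χ(g) W`. Fix parties `i ≠ j` and let every other party discard its input and
prepare `|0⟩`. By the process condition the bilinear form
`F(A, B) = Tr[W (A ⊗ B ⊗ …)]` (with `A`, `B` at `i`, `j`) is `1` on pairs of Choi matrices; a
matrix unit `E_{uv}` whose two indices have different outputs is a combination of differences
of Choi matrices, so `F(E_{xy}, E_{yx}) = 0` whenever `x`, `y` have different outputs. Since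
`E_{xy} ⊗ E_{yx} = (E_{xx} ⊗ E_{yy}) U_{(i j)}`, this value is `χ((i j)) F(E_{xx}, E_{yy})`, so
`F(E_{xx}, E_{yy}) = 0`. Summing over `x` with output `0` and `y` with output `1` gives
`F(1 ⊗ |0⟩⟨0|, 1 ⊗ |1⟩⟨1|) = 0`, whereas the process condition makes it `1`.
-/

open Function

section TensorSlots

variable {n : ℕ} {γ : Fin n → Type} [∀ k, Fintype (γ k)]

theorem tensorAll_update_apply (M : ∀ k, Matrix (γ k) (γ k) ℂ) (i : Fin n)
    (A : Matrix (γ i) (γ i) ℂ) (f f' : ∀ k, γ k) :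
    tensorAll (update M i A) f f' =
      A (f i) (f' i) * ∏ k ∈ Finset.univ.erase i, M k (f k) (f' k) := by
  rw [tensorAll, of_apply, ← Finset.mul_prod_erase _ _ (Finset.mem_univ i), update_self]
  congr 1
  refine Finset.prod_congr rfl fun k hk => ?_
  rw [update_of_ne (Finset.ne_of_mem_erase hk)]

theorem tensorAll_update_update_apply (M : ∀ k, Matrix (γ k) (γ k) ℂ) {i j : Fin n} (hij : i ≠ j)
    (A : Matrix (γ i) (γ i) ℂ) (B : Matrix (γ j) (γ j) ℂ) (f f' : ∀ k, γ k) :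
    tensorAll (update (update M i A) j B) f f' =
      A (f i) (f' i) * B (f j) (f' j) * ∏ k ∈ (Finset.univ.erase j).erase i, M k (f k) (f' k) := by
  rw [tensorAll_update_apply,
    ← Finset.mul_prod_erase _ _ (Finset.mem_erase.2 ⟨hij, Finset.mem_univ i⟩), update_self]
  rw [Finset.prod_congr rfl fun k hk => by rw [update_of_ne (Finset.ne_of_mem_erase hk)]]
  ring

theorem tensorAll_update_add (M : ∀ k, Matrix (γ k) (γ k) ℂ) (i : Fin n)
    (A B : Matrix (γ i) (γ i) ℂ) :
    tensorAll (update M i (A + B)) = tensorAll (update M i A) + tensorAll (update M i B) := by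
  ext f f'
  simp only [Matrix.add_apply, tensorAll_update_apply, add_mul]

theorem tensorAll_update_smul (M : ∀ k, Matrix (γ k) (γ k) ℂ) (i : Fin n) (c : ℂ)
    (A : Matrix (γ i) (γ i) ℂ) :
    tensorAll (update M i (c • A)) = c • tensorAll (update M i A) := by
  ext f f'
  simp only [Matrix.smul_apply, smul_eq_mul, tensorAll_update_apply, mul_assoc]

noncomputable def traceSlot (W : Matrix (∀ k, γ k) (∀ k, γ k) ℂ) (M : ∀ k, Matrix (γ k) (γ k) ℂ)
    (i : Fin n) : Matrix (γ i) (γ i) ℂ →ₗ[ℂ] ℂ where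
  toFun A := (W * tensorAll (update M i A)).trace
  map_add' A B := by rw [tensorAll_update_add, mul_add, trace_add]
  map_smul' c A := by rw [tensorAll_update_smul, mul_smul_comm, trace_smul, RingHom.id_apply]

theorem traceSlot_update_comm (W : Matrix (∀ k, γ k) (∀ k, γ k) ℂ) (M : ∀ k, Matrix (γ k) (γ k) ℂ)
    {i j : Fin n} (hij : i ≠ j) (A : Matrix (γ i) (γ i) ℂ) (B : Matrix (γ j) (γ j) ℂ) :
    traceSlot W (update M i A) j B = traceSlot W (update M j B) i A := by
  simp only [traceSlot, LinearMap.coe_mk, AddHom.coe_mk, update_comm hij]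

noncomputable def traceSlotPair (W : Matrix (∀ k, γ k) (∀ k, γ k) ℂ)
    (M : ∀ k, Matrix (γ k) (γ k) ℂ) {i j : Fin n} (hij : i ≠ j) :
    Matrix (γ i) (γ i) ℂ →ₗ[ℂ] Matrix (γ j) (γ j) ℂ →ₗ[ℂ] ℂ :=
  LinearMap.mk₂ ℂ (fun A B => traceSlot W (update M i A) j B)
    (fun A A' B => by simp only [traceSlot_update_comm W M hij, map_add])
    (fun c A B => by simp only [traceSlot_update_comm W M hij, map_smul, smul_eq_mul])
    (fun A B B' => map_add _ B B')
    (fun c A B => map_smul _ c B)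

theorem traceSlotPair_apply (W : Matrix (∀ k, γ k) (∀ k, γ k) ℂ)
    (M : ∀ k, Matrix (γ k) (γ k) ℂ) {i j : Fin n} (hij : i ≠ j) (A : Matrix (γ i) (γ i) ℂ)
    (B : Matrix (γ j) (γ j) ℂ) :
    traceSlotPair W M hij A B = (W * tensorAll (update (update M i A) j B)).trace :=
  rfl

end TensorSlots

/-- The Choi matrices of CPTP maps from `ℂ^α` to `ℂ^β`. -/
def IsChoi {α β : Type} [Fintype β] [DecidableEq α] (C : Matrix (α × β) (α × β) ℂ) : Prop :=
  C.PosSemidef ∧ ptraceOut C = 1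

/-- `½ |w⟩⟨w| + D` with `w = e_u + e·e_v`; when `u`, `v` have different outputs and `|e| = 1`,
the diagonal `D ≥ 0` tops the partial trace of `½ |w⟩⟨w|` up to the identity. -/
noncomputable def polarizingChoi (u v : Fin 2 × Fin 2) (e : ℂ) :
    Matrix (Fin 2 × Fin 2) (Fin 2 × Fin 2) ℂ :=
  (2⁻¹ : ℂ) • vecMulVec (Pi.single u 1 + Pi.single v e) (star (Pi.single u 1 + Pi.single v e)) +
    diagonal fun p => 2⁻¹ - (if p.1 = u.1 then 4⁻¹ else 0) - (if p.1 = v.1 then 4⁻¹ else 0)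

theorem isChoi_polarizingChoi {u v : Fin 2 × Fin 2} (huv : u.2 ≠ v.2) {e : ℂ}
    (he : star e * e = 1) : IsChoi (polarizingChoi u v e) := by
  refine ⟨(posSemidef_vecMulVec_self_star _).smul (by norm_num [Complex.nonneg_iff]) |>.add
    (PosSemidef.diagonal fun p => ?_), ?_⟩
  · dsimp only
    split_ifs <;> norm_num [Complex.nonneg_iff]
  · obtain ⟨u1, u2⟩ := u
    obtain ⟨v1, v2⟩ := v
    ext a a'
    fin_cases u2 <;> fin_cases v2 <;> simp_all <;>
      fin_cases u1 <;> fin_cases v1 <;> fin_cases a <;> fin_cases a' <;>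
        simp [polarizingChoi, ptraceOut, vecMulVec, Pi.single_apply, diagonal_apply, one_apply,
          Fin.sum_univ_two, Prod.ext_iff, he, mul_comm e] <;> norm_num

theorem polarizingChoi_sub_polarizingChoi_neg (u v : Fin 2 × Fin 2) (e : ℂ) :
    polarizingChoi u v e - polarizingChoi u v (-e) = star e • single u v 1 + e • single v u 1 := by
  ext p q
  by_cases hpu : p = u <;> by_cases hpv : p = v <;> by_cases hqu : q = u <;>
    by_cases hqv : q = v <;> subst_vars <;>
    simp_all [polarizingChoi, vecMulVec_apply, eq_comm] <;> ring

theorem apply_single_eq_zero_of_forall_isChoi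
    (φ : Matrix (Fin 2 × Fin 2) (Fin 2 × Fin 2) ℂ →ₗ[ℂ] ℂ) {c : ℂ}
    (hφ : ∀ C, IsChoi C → φ C = c) {u v : Fin 2 × Fin 2} (huv : u.2 ≠ v.2) :
    φ (single u v 1) = 0 := by
  have hpolar : ∀ e : ℂ, star e * e = 1 → star e * φ (single u v 1) + e * φ (single v u 1) = 0 := by
    intro e he
    have he' : star (-e) * -e = 1 := by rwa [star_neg, neg_mul_neg]
    rw [← smul_eq_mul, ← smul_eq_mul, ← map_smul, ← map_smul, ← map_add,
      ← polarizingChoi_sub_polarizingChoi_neg, map_sub, hφ _ (isChoi_polarizingChoi huv he),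
      hφ _ (isChoi_polarizingChoi huv he'), sub_self]
  have h1 := hpolar 1 (by simp)
  have hI := hpolar Complex.I (by simp)
  simp only [star_one, one_mul, Complex.star_def, Complex.conj_I] at h1 hI
  linear_combination (1 / 2 : ℂ) * h1 + (Complex.I / 2) * hI +
    (φ (single u v 1) - φ (single v u 1)) / 2 * Complex.I_sq

/-- The Choi matrix `1 ⊗ |o⟩⟨o|` of the channel that discards its input and prepares `|o⟩`. -/
noncomputable def prepChoi (o : Fin 2) : Matrix (Fin 2 × Fin 2) (Fin 2 × Fin 2) ℂ :=
  ∑ a, single (a, o) (a, o) 1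

theorem isChoi_prepChoi (o : Fin 2) : IsChoi (prepChoi o) := by
  refine ⟨posSemidef_sum _ fun a _ => ?_, ?_⟩
  · rw [single_eq_single_vecMulVec_single]
    simpa using posSemidef_vecMulVec_self_star (Pi.single (a, o) (1 : ℂ))
  · ext a a'
    fin_cases o <;> fin_cases a <;> fin_cases a' <;>
      simp [prepChoi, ptraceOut, single_apply, one_apply, Fin.sum_univ_two]

section ProcessMatrix

variable {n : ℕ} {ι κ : Fin n → Type} [∀ k, Fintype (ι k)] [∀ k, Fintype (κ k)]
  [∀ k, DecidableEq (ι k)] {W : Matrix (∀ k, ι k × κ k) (∀ k, ι k × κ k) ℂ}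

theorem IsProcessMatrix.trace_mul_tensorAll (hW : IsProcessMatrix W)
    {M : ∀ k, Matrix (ι k × κ k) (ι k × κ k) ℂ} (hM : ∀ k, IsChoi (M k)) :
    (W * tensorAll M).trace = 1 :=
  hW.2 M (fun k => (hM k).1) fun k => (hM k).2

theorem IsProcessMatrix.traceSlotPair_eq_one (hW : IsProcessMatrix W)
    {M : ∀ k, Matrix (ι k × κ k) (ι k × κ k) ℂ} (hM : ∀ k, IsChoi (M k)) {i j : Fin n}
    (hij : i ≠ j) {A : Matrix (ι i × κ i) (ι i × κ i) ℂ} {B : Matrix (ι j × κ j) (ι j × κ j) ℂ}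
    (hA : IsChoi A) (hB : IsChoi B) : traceSlotPair W M hij A B = 1 := by
  refine hW.trace_mul_tensorAll ((forall_update_iff _ fun k C => IsChoi C).2 ⟨hB, fun k _ => ?_⟩)
  exact (forall_update_iff M fun k C => IsChoi C).2 ⟨hA, fun k _ => hM k⟩ k

end ProcessMatrix

theorem IsProcessMatrix.traceSlotPair_single_single {n : ℕ}
    {W : Matrix (Fin n → Fin 2 × Fin 2) (Fin n → Fin 2 × Fin 2) ℂ}
    (hW : IsProcessMatrix (ι := fun _ => Fin 2) (κ := fun _ => Fin 2) W)
    {M : Fin n → Matrix (Fin 2 × Fin 2) (Fin 2 × Fin 2) ℂ} (hM : ∀ k, IsChoi (M k))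
    {i j : Fin n} (hij : i ≠ j) {u v x y : Fin 2 × Fin 2} (huv : u.2 ≠ v.2) (hxy : x.2 ≠ y.2) :
    traceSlotPair W M hij (single u v 1) (single x y 1) = 0 := by
  have hB : ∀ B, IsChoi B → traceSlotPair W M hij (single u v 1) B = 0 := fun B hB =>
    apply_single_eq_zero_of_forall_isChoi (c := 1) ((traceSlotPair W M hij).flip B)
      (fun A hA => by rw [LinearMap.flip_apply]; exact hW.traceSlotPair_eq_one hM hij hA hB) huv
  exact apply_single_eq_zero_of_forall_isChoi (traceSlotPair W M hij (single u v 1)) hB hxy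

theorem Matrix.mul_eq_smul_of_idempotent {m R : Type*} [Fintype m] [CommSemiring R]
    {P : Matrix m m R} (hP : P * P = P) (U : Matrix m m R) (c : R)
    (h : ∀ v, P *ᵥ v = v → U *ᵥ v = c • v) : U * P = c • P := by
  refine ext_iff_mulVec.2 fun v => ?_
  rw [← mulVec_mulVec, h _ (by rw [mulVec_mulVec, hP]), smul_mulVec]

section Permutation

variable {n : ℕ}

theorem mul_permMat_apply (X : Matrix (Fin n → Fin 2 × Fin 2) (Fin n → Fin 2 × Fin 2) ℂ)
    (g : Equiv.Perm (Fin n)) (p q : Fin n → Fin 2 × Fin 2) :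
    (X * permMat n g) p q = X p (q ∘ g.symm) := by
  have hq : ∀ r : Fin n → Fin 2 × Fin 2, q = r ∘ g ↔ r = q ∘ g.symm := fun r => by
    constructor <;> rintro rfl <;> ext1 k <;> simp
  simp only [mul_apply, permMat, of_apply, hq, mul_ite, mul_one, mul_zero, Finset.sum_ite_eq',
    Finset.mem_univ, if_true]

theorem trace_mul_mul_permMat {W : Matrix (Fin n → Fin 2 × Fin 2) (Fin n → Fin 2 × Fin 2) ℂ}
    {g : Equiv.Perm (Fin n)} {c : ℂ} (hW : permMat n g * W = c • W)
    (X : Matrix (Fin n → Fin 2 × Fin 2) (Fin n → Fin 2 × Fin 2) ℂ) :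
    (W * (X * permMat n g)).trace = c * (W * X).trace := by
  rw [← Matrix.mul_assoc, trace_mul_comm, ← Matrix.mul_assoc, hW, smul_mul_assoc, trace_smul,
    smul_eq_mul]

theorem tensorAll_update_update_mul_permMat_swap
    (M : Fin n → Matrix (Fin 2 × Fin 2) (Fin 2 × Fin 2) ℂ) {i j : Fin n} (hij : i ≠ j)
    (x y : Fin 2 × Fin 2) :
    tensorAll (update (update M i (single x x 1)) j (single y y 1)) * permMat n (Equiv.swap i j) =
      tensorAll (update (update M i (single x y 1)) j (single y x 1)) := by
  ext p q
  rw [mul_permMat_apply, tensorAll_update_update_apply _ hij,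
    tensorAll_update_update_apply _ hij]
  have hrest : ∀ k ∈ (Finset.univ.erase j).erase i, (q ∘ (Equiv.swap i j).symm) k = q k :=
    fun k hk => by
      simp [Equiv.swap_apply_of_ne_of_ne (Finset.ne_of_mem_erase hk)
        (Finset.ne_of_mem_erase (Finset.mem_of_mem_erase hk))]
  rw [Finset.prod_congr rfl fun k hk => by rw [hrest k hk]]
  simp only [Equiv.symm_swap, Function.comp_apply, Equiv.swap_apply_left, Equiv.swap_apply_right,
    single_apply]
  congr 1
  rw [ite_zero_mul_ite_zero, ite_zero_mul_ite_zero]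
  exact if_congr (by grind) rfl rfl

theorem sgnChar_ne_zero (ε : Bool) (g : Equiv.Perm (Fin n)) : sgnChar ε g ≠ 0 := by
  cases ε
  · simp [sgnChar]
  · rcases Int.units_eq_one_or (Equiv.Perm.sign g) with h | h <;> simp [sgnChar, h]

end Permutation

theorem no_symmetric_or_antisymmetric_qubit_process_general (n : ℕ) (hn : 2 ≤ n) (ε : Bool)
    (P : Matrix (Fin n → Fin 2 × Fin 2) (Fin n → Fin 2 × Fin 2) ℂ)
    (hPidem : P * P = P)
    (hPrange : ∀ v : (Fin n → Fin 2 × Fin 2) → ℂ,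
      P.mulVec v = v ↔
        ∀ g : Equiv.Perm (Fin n), (permMat n g).mulVec v = sgnChar ε g • v) :
    ¬ ∃ W : Matrix (Fin n → Fin 2 × Fin 2) (Fin n → Fin 2 × Fin 2) ℂ,
        IsProcessMatrix (ι := fun _ => Fin 2) (κ := fun _ => Fin 2) W ∧
          W = P * W * P := by
  rintro ⟨W, hW, hWP⟩
  have : Nontrivial (Fin n) := Fin.nontrivial_iff_two_le.2 hn
  obtain ⟨i, j, hij⟩ := exists_pair_ne (Fin n)
  have hPU : ∀ g, permMat n g * P = sgnChar ε g • P := fun g =>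
    mul_eq_smul_of_idempotent hPidem _ _ fun v hv => (hPrange v).1 hv g
  have hWU : permMat n (Equiv.swap i j) * W = sgnChar ε (Equiv.swap i j) • W := by
    rw [hWP, ← Matrix.mul_assoc, ← Matrix.mul_assoc, hPU, smul_mul_assoc, smul_mul_assoc]
  have hM : ∀ _ : Fin n, IsChoi (prepChoi 0) := fun _ => isChoi_prepChoi 0
  set F := traceSlotPair W (fun _ => prepChoi 0) hij
  have hdiag : ∀ x y : Fin 2 × Fin 2, x.2 ≠ y.2 → F (single x x 1) (single y y 1) = 0 := by
    intro x y hxy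
    have h := hW.traceSlotPair_single_single hM hij hxy hxy.symm
    rw [traceSlotPair_apply, ← tensorAll_update_update_mul_permMat_swap _ hij,
      trace_mul_mul_permMat hWU] at h
    exact (mul_eq_zero.1 h).resolve_left (sgnChar_ne_zero _ _)
  have h : F (prepChoi 0) (prepChoi 1) = 1 :=
    hW.traceSlotPair_eq_one hM hij (isChoi_prepChoi 0) (isChoi_prepChoi 1)
  simp only [prepChoi, map_sum, LinearMap.sum_apply] at h
  rw [Finset.sum_eq_zero fun _ _ => Finset.sum_eq_zero fun _ _ => hdiag _ _ (by simp)] at h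
  exact zero_ne_one h

/-- for `n ≥ 2`, no valid `n`-partite qubit process matrix lies entirely
in the symmetric representation of `S_n`, and none lies entirely in the antisymmetric
representation: if `P` is the orthogonal projector onto
`{v : U_g v = v ∀ g ∈ S_n}` (the case `ε = false`) or onto
`{v : U_g v = sgn(g) v ∀ g ∈ S_n}` (the case `ε = true`), then there is no valid
`n`-partite process matrix `W` with `W = P W P`. -/
theorem no_symmetric_or_antisymmetric_qubit_process (n : ℕ) (hn : 2 ≤ n) (ε : Bool)
    (P : Matrix (Fin n → Fin 2 × Fin 2) (Fin n → Fin 2 × Fin 2) ℂ)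
    (hPherm : P.IsHermitian) (hPidem : P * P = P)
    (hPrange : ∀ v : (Fin n → Fin 2 × Fin 2) → ℂ,
      P.mulVec v = v ↔
        ∀ g : Equiv.Perm (Fin n), (permMat n g).mulVec v = sgnChar ε g • v) :
    ¬ ∃ W : Matrix (Fin n → Fin 2 × Fin 2) (Fin n → Fin 2 × Fin 2) ℂ,
        IsProcessMatrix (ι := fun _ => Fin 2) (κ := fun _ => Fin 2) W ∧
          W = P * W * P :=
  no_symmetric_or_antisymmetric_qubit_process_general n hn ε P hPidem hPrange
end
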